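/- arXiv:2504.09991 — 5 statements merged into one kernel-verified Lean document; each statement's English description precedes it below -/
import Mathlib

section
/- Berge's theorem: a matching M in a graph G is a maximum matching if and only if there is no augmenting path with respect to M. -/
set_option linter.unusedSectionVars false
set_option maxHeartbeats 1000000

variable {V : Type*} [DecidableEq V]

/-- `M` is a matching in the graph with edge set `E`: a set of edges of `E`
such that no two distinct edges share a vertex. -/
def IsMatching (E M : Finset (Sym2 V)) : Prop :=
  M ⊆ E ∧ ∀ e ∈ M, ∀ f ∈ M, e ≠ f → ∀ v, v ∈ e → v ∉ f

/-- The list of edges of the path given by the vertex list `l`. -/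
def pathEdges (l : List V) : List (Sym2 V) :=
  (l.zip l.tail).map fun p => s(p.1, p.2)

/-- `l` is (the vertex list of) an augmenting path with respect to the matching `M` in the
graph with edge set `E`: a path (distinct vertices, consecutive pairs forming edges of `E`)
with an odd number of edges, alternating between edges outside `M` (the even-indexed, in
particular the first and last) and edges of `M` (the odd-indexed), whose two endpoints are
unmatched by `M`. -/
def IsAugPath (E M : Finset (Sym2 V)) (l : List V) : Prop :=
  2 ≤ l.length ∧ l.Nodup ∧
    (∀ e ∈ pathEdges l, e ∈ E) ∧
    (pathEdges l).length % 2 = 1 ∧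
    (∀ i (h : i < (pathEdges l).length), ((pathEdges l)[i] ∈ M ↔ i % 2 = 1)) ∧
    (∀ e ∈ M, (∀ a, l.head? = some a → a ∉ e) ∧ (∀ a, l.getLast? = some a → a ∉ e))

/-! ### Basic lemmas about `pathEdges` -/

theorem pathEdges_length (l : List V) : (pathEdges l).length = l.length - 1 := by
  simp [pathEdges, List.length_zip]

theorem pathEdges_get (l : List V) (i : ℕ) (h : i < (pathEdges l).length) :
    (pathEdges l)[i] = s(l[i]'(by simp [pathEdges_length] at h; omega),
      l[i+1]'(by simp [pathEdges_length] at h; omega)) := by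
  simp [pathEdges]

theorem mem_pathEdges {l : List V} {e : Sym2 V} :
    e ∈ pathEdges l ↔ ∃ i, ∃ h : i < (pathEdges l).length, e = (pathEdges l)[i] := by
  constructor
  · intro he
    obtain ⟨i, h, rfl⟩ := List.mem_iff_getElem.mp he
    exact ⟨i, h, rfl⟩
  · rintro ⟨i, h, rfl⟩; exact List.getElem_mem _

theorem pathEdges_nodup {l : List V} (h : l.Nodup) : (pathEdges l).Nodup := by
  rw [List.nodup_iff_injective_getElem]
  rintro ⟨i, hi⟩ ⟨j, hj⟩ hij
  have hL := pathEdges_length l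
  simp only [pathEdges_get] at hij
  rw [Sym2.eq_iff] at hij
  have h1 := fun a b (ha : a < l.length) (hb : b < l.length) (e : l[a]'ha = l[b]'hb) =>
    h.getElem_inj_iff.mp e
  have hi' : i < l.length - 1 := hL ▸ hi
  have hj' : j < l.length - 1 := hL ▸ hj
  ext
  rcases hij with ⟨e1, e2⟩ | ⟨e1, e2⟩
  · exact h1 _ _ (by omega) (by omega) e1
  · have := h1 _ _ (by omega) (by omega) e1
    have := h1 _ _ (by omega) (by omega) e2
    omega

theorem head?_eq (l : List V) (h : 0 < l.length) : l.head? = some (l[0]'h) := by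
  cases l with
  | nil => simp at h
  | cons a t => rfl

theorem getLast?_eq (l : List V) (h : 0 < l.length) :
    l.getLast? = some (l[l.length - 1]'(by omega)) := by
  rw [List.getLast?_eq_getElem?, List.getElem?_eq_getElem]

/-! ### Counting lemmas -/

theorem countP_alt (p : Sym2 V → Prop) [DecidablePred p] :
    ∀ (es : List (Sym2 V)) (r : ℕ), r ≤ 1 →
      (∀ i (h : i < es.length), p es[i] ↔ i % 2 = r) →
      es.countP (fun e => decide (p e)) =
        if r = 1 then es.length / 2 else es.length - es.length / 2
  | [], r, hr, halt => by simp
  | e :: es, r, hr, halt => by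
    have h0 : p e ↔ 0 % 2 = r := halt 0 (by simp)
    have hrec := countP_alt p es (1 - r) (by omega) (fun i h => by
      have := halt (i + 1) (by simp; omega)
      simpa using (this.trans (by constructor <;> omega)))
    rw [List.countP_cons]
    rcases Nat.lt_or_ge r 1 with hc | hc
    · have hr0 : r = 0 := by omega
      subst hr0
      have hpe : p e := h0.mpr rfl
      rw [if_pos (by omega : (1:ℕ)-0 = 1)] at hrec
      rw [if_neg (by omega : ¬(0:ℕ) = 1)]
      simp only [List.length_cons, hrec]
      simp [hpe]
      omega
    · have hr1 : r = 1 := by omega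
      subst hr1
      have hpe : ¬ p e := fun hp => by have := h0.mp hp; omega
      rw [if_neg (by omega : ¬(1:ℕ)-1 = 1)] at hrec
      rw [if_pos rfl]
      simp only [List.length_cons, hrec]
      simp [hpe]
      omega

theorem card_filter_toFinset (es : List (Sym2 V)) (hnd : es.Nodup)
    (p : Sym2 V → Prop) [DecidablePred p] :
    (es.toFinset.filter p).card = es.countP (fun e => decide (p e)) := by
  have h1 : es.toFinset.filter p = (es.filter (fun e => decide (p e))).toFinset := by
    ext e
    simp [List.mem_filter]
  rw [h1, List.card_toFinset, List.Nodup.dedup (hnd.filter _), List.countP_eq_length_filter]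

/-! ### Vertex covers of edge sets -/

def vset (e : Sym2 V) : Finset V :=
  Sym2.lift ⟨fun x y => ({x, y} : Finset V), fun x y => Finset.pair_comm x y⟩ e

@[simp] theorem mem_vset {v : V} {e : Sym2 V} : v ∈ vset e ↔ v ∈ e := by
  induction e using Sym2.inductionOn with
  | hf x y => simp [vset, Sym2.mem_iff]

theorem card_vset {e : Sym2 V} (h : ¬ e.IsDiag) : (vset e).card = 2 := by
  induction e using Sym2.inductionOn with
  | hf x y =>
    rw [Sym2.mk_isDiag_iff] at h
    simp [vset, Finset.card_pair h]

def cov (N : Finset (Sym2 V)) : Finset V := N.biUnion vset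

theorem mem_cov {v : V} {N : Finset (Sym2 V)} : v ∈ cov N ↔ ∃ e ∈ N, v ∈ e := by
  simp [cov]

theorem card_cov {E N : Finset (Sym2 V)} (hs : ∀ e ∈ E, ¬ e.IsDiag)
    (hN : IsMatching E N) : (cov N).card = 2 * N.card := by
  rw [cov, Finset.card_biUnion]
  · rw [Finset.sum_congr rfl (fun e he => card_vset (hs e (hN.1 he)))]
    simp [Nat.mul_comm]
  · intro e he f hf hef
    simp only [Finset.disjoint_left]
    intro v hv hv'
    exact hN.2 e he f hf hef v (mem_vset.mp hv) (mem_vset.mp hv')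

theorem exists_uncov {E M M' : Finset (Sym2 V)} (hs : ∀ e ∈ E, ¬ e.IsDiag)
    (hM : IsMatching E M) (hM' : IsMatching E M') (hc : M.card < M'.card) :
    ∃ a, a ∈ cov M' ∧ a ∉ cov M := by
  by_contra h
  push_neg at h
  have hsub : cov M' ⊆ cov M := fun a ha => h a ha
  have := Finset.card_le_card hsub
  rw [card_cov hs hM, card_cov hs hM'] at this
  omega

/-! ### The switching lemma -/

theorem switch {E N : Finset (Sym2 V)} (hs : ∀ e ∈ E, ¬ e.IsDiag) (hN : IsMatching E N)
    (l : List V) (r : ℕ) (hr : r ≤ 1) (hlen : 2 ≤ l.length) (hnd : l.Nodup)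
    (hE : ∀ e ∈ pathEdges l, e ∈ E)
    (halt : ∀ i (h : i < (pathEdges l).length), ((pathEdges l)[i] ∈ N ↔ i % 2 = r))
    (hend : ∀ f ∈ N, f ∉ pathEdges l →
      (∀ a, l.head? = some a → a ∉ f) ∧ (∀ a, l.getLast? = some a → a ∉ f)) :
    IsMatching E ((N \ (pathEdges l).toFinset) ∪ ((pathEdges l).toFinset \ N)) ∧
    ((N \ (pathEdges l).toFinset) ∪ ((pathEdges l).toFinset \ N)).card
      + (if r = 1 then (pathEdges l).length / 2
         else (pathEdges l).length - (pathEdges l).length / 2)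
      = N.card
      + (if r = 1 then (pathEdges l).length - (pathEdges l).length / 2
         else (pathEdges l).length / 2) := by
  have hL : (pathEdges l).length = l.length - 1 := pathEdges_length l
  set es := pathEdges l with hes
  set n := es.length with hn
  set P := es.toFinset with hP
  have hnd' : es.Nodup := pathEdges_nodup hnd
  have hveq : (pathEdges l).length = n := rfl
  have hginj := fun a b (ha : a < l.length) (hb : b < l.length) (e : l[a]'ha = l[b]'hb) =>
    hnd.getElem_inj_iff.mp e
  -- key1 : an unswitched matching edge cannot meet a path edge of the non-`N` parity
  have key1 : ∀ i (hi : i < n), ¬ (i % 2 = r) → ∀ f ∈ N, f ∉ es →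
      ∀ v, v ∈ es[i] → v ∉ f := by
    intro i hi hir f hfN hfP v hv hvf
    rw [pathEdges_get _ i hi, Sym2.mem_iff] at hv
    rcases hv with rfl | rfl
    · rcases Nat.eq_zero_or_pos i with rfl | hpos
      · exact (hend f hfN hfP).1 _ (head?_eq l (by omega)) hvf
      · have hprev : es[i-1]'(by omega) ∈ N := (halt (i-1) (by omega)).mpr (by omega)
        have hvprev : l[i]'(by omega) ∈ es[i-1]'(by omega) := by
          rw [pathEdges_get _ (i-1) (by omega), Sym2.mem_iff]
          right
          congr 1
          omega
        by_cases hfe : f = es[i-1]'(by omega)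
        · exact hfP (hfe ▸ List.getElem_mem _)
        · exact hN.2 f hfN _ hprev hfe _ hvf hvprev
    · rcases Nat.lt_or_ge (i+1) n with hlt | hge
      · have hnext : es[i+1]'hlt ∈ N := (halt (i+1) hlt).mpr (by omega)
        have hvnext : l[i+1]'(by omega) ∈ es[i+1]'hlt := by
          rw [pathEdges_get _ (i+1) hlt, Sym2.mem_iff]
          left; rfl
        by_cases hfe : f = es[i+1]'hlt
        · exact hfP (hfe ▸ List.getElem_mem _)
        · exact hN.2 f hfN _ hnext hfe _ hvf hvnext
      · have hin : i + 1 = n := by omega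
        have hlast := (hend f hfN hfP).2 _ (getLast?_eq l (by omega))
        have : l[i+1]'(by omega) = l[l.length-1]'(by omega) := by
          congr 1
          omega
        rw [this] at hvf
        exact hlast hvf
  -- key2 : two switched-in path edges are disjoint
  have key2 : ∀ i j (hi : i < n) (hj : j < n), ¬(i % 2 = r) → ¬(j % 2 = r) →
      es[i] ≠ es[j] → ∀ v, v ∈ es[i] → v ∉ es[j] := by
    intro i j hi hj hir hjr hne v hv hv'
    have hij : i ≠ j := by rintro rfl; exact hne rfl
    rw [pathEdges_get _ i hi, Sym2.mem_iff] at hv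
    rw [pathEdges_get _ j hj, Sym2.mem_iff] at hv'
    rcases hv with rfl | rfl <;> rcases hv' with h' | h' <;>
      [ (have := hginj _ _ (by omega) (by omega) h');
        (have := hginj _ _ (by omega) (by omega) h');
        (have := hginj _ _ (by omega) (by omega) h');
        (have := hginj _ _ (by omega) (by omega) h') ] <;> omega
  have hPes : ∀ {e : Sym2 V}, e ∈ P ↔ e ∈ es := fun {e} => List.mem_toFinset
  have hidxN : ∀ {f : Sym2 V}, f ∈ es → f ∉ N → ∃ i, ∃ h : i < n, f = es[i] ∧ ¬ (i % 2 = r) := by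
    intro f hf hfN
    obtain ⟨i, h, rfl⟩ := mem_pathEdges.mp hf
    exact ⟨i, h, rfl, fun hir => hfN ((halt i h).mpr hir)⟩
  constructor
  · constructor
    · intro e he
      rcases Finset.mem_union.mp he with h | h
      · exact hN.1 (Finset.mem_sdiff.mp h).1
      · exact hE _ (hPes.mp (Finset.mem_sdiff.mp h).1)
    · intro e he f hf hne v hv hvf
      rcases Finset.mem_union.mp he with he' | he' <;>
        rcases Finset.mem_union.mp hf with hf' | hf'
      · obtain ⟨heN, heP⟩ := Finset.mem_sdiff.mp he'
        obtain ⟨hfN, hfP⟩ := Finset.mem_sdiff.mp hf'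
        exact hN.2 e heN f hfN hne v hv hvf
      · obtain ⟨heN, heP⟩ := Finset.mem_sdiff.mp he'
        obtain ⟨hfP, hfN⟩ := Finset.mem_sdiff.mp hf'
        obtain ⟨j, hj, rfl, hjr⟩ := hidxN (hPes.mp hfP) hfN
        exact key1 j hj hjr e heN (fun h => heP (hPes.mpr h)) v hvf hv
      · obtain ⟨heP, heN⟩ := Finset.mem_sdiff.mp he'
        obtain ⟨hfN, hfP⟩ := Finset.mem_sdiff.mp hf'
        obtain ⟨i, hi, rfl, hir⟩ := hidxN (hPes.mp heP) heN
        exact key1 i hi hir f hfN (fun h => hfP (hPes.mpr h)) v hv hvf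
      · obtain ⟨heP, heN⟩ := Finset.mem_sdiff.mp he'
        obtain ⟨hfP, hfN⟩ := Finset.mem_sdiff.mp hf'
        obtain ⟨i, hi, rfl, hir⟩ := hidxN (hPes.mp heP) heN
        obtain ⟨j, hj, rfl, hjr⟩ := hidxN (hPes.mp hfP) hfN
        exact key2 i j hi hj hir hjr hne v hv hvf
  · have hdisj : Disjoint (N \ P) (P \ N) := Finset.disjoint_left.mpr
      (fun e he hf => (Finset.mem_sdiff.mp he).2 (Finset.mem_sdiff.mp hf).1)
    have h1 : ((N \ P) ∪ (P \ N)).card = (N \ P).card + (P \ N).card :=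
      Finset.card_union_of_disjoint hdisj
    have h2 : (N \ P).card + (N ∩ P).card = N.card := Finset.card_sdiff_add_card_inter N P
    have hNP : (N ∩ P).card = if r = 1 then n / 2 else n - n / 2 := by
      rw [Finset.inter_comm, ← Finset.filter_mem_eq_inter,
        card_filter_toFinset es hnd' (· ∈ N)]
      exact countP_alt (· ∈ N) es r hr halt
    have hPN : (P \ N).card = if r = 1 then n - n / 2 else n / 2 := by
      rw [Finset.sdiff_eq_filter, card_filter_toFinset es hnd' (· ∉ N)]
      have := countP_alt (· ∉ N) es (1 - r) (by omega) (fun i h => by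
        rw [not_iff_comm, halt i h]
        constructor <;> omega)
      rw [this]
      rcases Nat.lt_or_ge r 1 with hc | hc
      · rw [if_pos (by omega), if_neg (by omega)]
      · rw [if_neg (by omega), if_pos (by omega)]
    rw [h1]
    rcases Nat.lt_or_ge r 1 with hc | hc
    · simp only [if_neg (show ¬ r = 1 by omega)] at hNP hPN ⊢
      omega
    · simp only [if_pos (show r = 1 by omega)] at hNP hPN ⊢
      omega

/-! ### Alternating walks -/

def IsWalk (M1 M2 : Finset (Sym2 V)) (l : List V) : Prop :=
  2 ≤ l.length ∧ (∀ f ∈ M1, ∀ a, l.head? = some a → a ∉ f) ∧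
  ∀ i (h : i < (pathEdges l).length),
     (i % 2 = 0 → (pathEdges l)[i] ∈ M2 ∧ (pathEdges l)[i] ∉ M1) ∧
     (i % 2 = 1 → (pathEdges l)[i] ∈ M1 ∧ (pathEdges l)[i] ∉ M2)

theorem walk_nodup {E M1 M2 : Finset (Sym2 V)} (hs : ∀ e ∈ E, ¬ e.IsDiag)
    (hM1 : IsMatching E M1) (hM2 : IsMatching E M2)
    {l : List V} (hw : IsWalk M1 M2 l) : l.Nodup := by
  classical
  obtain ⟨hlen, hhead, halt⟩ := hw
  have hL := pathEdges_length l
  have gcongr : ∀ (a b : ℕ) (ha : a < l.length) (hb : b < l.length),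
      a = b → l[a]'ha = l[b]'hb := by
    intro a b ha hb h; subst h; rfl
  have hedgeE : ∀ i (hi : i < (pathEdges l).length), (pathEdges l)[i] ∈ E := by
    intro i hi
    rcases Nat.mod_two_eq_zero_or_one i with h | h
    · exact hM2.1 ((halt i hi).1 h).1
    · exact hM1.1 ((halt i hi).2 h).1
  have nond : ∀ i (hi : i < (pathEdges l).length),
      l[i]'(by omega) ≠ l[i+1]'(by omega) := by
    intro i hi heq2
    refine hs _ (hedgeE i hi) ?_
    rw [pathEdges_get _ i hi]
    exact Sym2.mk_isDiag_iff.mpr heq2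
  by_contra hnodup
  rw [List.nodup_iff_injective_getElem] at hnodup
  simp only [Function.Injective] at hnodup
  push_neg at hnodup
  obtain ⟨⟨a, ha⟩, ⟨b, hb⟩, heqab, hne⟩ := hnodup
  have hab : a ≠ b := fun h => hne (Fin.ext h)
  have hQ : ∃ m, ∃ (hm : m < l.length), ∃ i, ∃ (hi : i < m),
      l[i]'(Nat.lt_trans hi hm) = l[m]'hm := by
    rcases Nat.lt_or_ge a b with h | h
    · exact ⟨b, hb, a, h, heqab⟩
    · exact ⟨a, ha, b, by omega, heqab.symm⟩
  set k := Nat.find hQ with hkdef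
  obtain ⟨hk, j, hj, heq⟩ := Nat.find_spec hQ
  have hdist : ∀ a b (ha : a < l.length) (hb : b < l.length), a < k → b < k →
      a ≠ b → l[a]'ha = l[b]'hb → False := by
    intro a b ha hb hak hbk hne' heq'
    rcases Nat.lt_or_ge a b with h | h
    · exact Nat.find_min hQ hbk ⟨hb, a, h, heq'⟩
    · exact Nat.find_min hQ hak ⟨ha, b, by omega, heq'.symm⟩
  have hk1n : k - 1 < (pathEdges l).length := by omega
  have hjl : j < l.length := by omega
  have hlk : l[k]'hk ∈ (pathEdges l)[k-1]'hk1n := by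
    rw [pathEdges_get _ (k-1) hk1n, Sym2.mem_iff]
    right
    exact (gcongr k (k-1+1) hk (by omega) (by omega)).symm ▸ rfl
  have hjmemk : l[j]'hjl ∈ (pathEdges l)[k-1]'hk1n := by
    rw [heq]; exact hlk
  have main : ∀ (N : Finset (Sym2 V)), IsMatching E N →
      ∀ i0 (hi0 : i0 < (pathEdges l).length), i0 ≤ k - 1 → i0 % 2 = (k-1) % 2 →
      (i0 = k - 1 → j = k - 1) →
      (pathEdges l)[i0] ∈ N → (pathEdges l)[k-1]'hk1n ∈ N →
      l[j]'hjl ∈ (pathEdges l)[i0] → False := by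
    intro N hNm i0 hi0 hle hpar himp hi0N hkN hjmem
    by_cases hik : i0 = k - 1
    · have hjk := himp hik
      apply nond (k-1) hk1n
      calc l[k-1]'(by omega) = l[j]'hjl := gcongr _ _ _ _ hjk.symm
        _ = l[k]'hk := heq
        _ = l[k-1+1]'(by omega) := gcongr _ _ _ _ (by omega)
    · have h2 : i0 + 2 ≤ k - 1 := by omega
      by_cases hee : (pathEdges l)[i0] = (pathEdges l)[k-1]'hk1n
      · rw [pathEdges_get _ i0 hi0, pathEdges_get _ (k-1) hk1n, Sym2.eq_iff] at hee
        rcases hee with ⟨e1, _⟩ | ⟨_, e2⟩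
        · exact hdist i0 (k-1) (by omega) (by omega) (by omega) (by omega) (by omega) e1
        · exact hdist (i0+1) (k-1) (by omega) (by omega) (by omega) (by omega) (by omega) e2
      · exact hNm.2 _ hi0N _ hkN hee (l[j]'hjl) hjmem hjmemk
  rcases Nat.mod_two_eq_zero_or_one (k-1) with hp0 | hp1
  · -- last edge is in M2
    have hkN : (pathEdges l)[k-1]'hk1n ∈ M2 := ((halt (k-1) hk1n).1 hp0).1
    rcases Nat.eq_zero_or_pos j with rfl | hjpos
    · refine main M2 hM2 0 (by omega) (by omega) (by omega) (by omega) ?_ hkN ?_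
      · exact ((halt 0 (by omega)).1 (by omega)).1
      · rw [pathEdges_get _ 0 (by omega), Sym2.mem_iff]; left; rfl
    · rcases Nat.mod_two_eq_zero_or_one j with hj0 | hj1
      · refine main M2 hM2 j (by omega) (by omega) (by omega) (by omega) ?_ hkN ?_
        · exact ((halt j (by omega)).1 hj0).1
        · rw [pathEdges_get _ j (by omega), Sym2.mem_iff]; left; rfl
      · refine main M2 hM2 (j-1) (by omega) (by omega) (by omega) (by omega) ?_ hkN ?_
        · exact ((halt (j-1) (by omega)).1 (by omega)).1
        · rw [pathEdges_get _ (j-1) (by omega), Sym2.mem_iff]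
          right
          exact gcongr _ _ _ _ (by omega)
  · -- last edge is in M1
    have hkN : (pathEdges l)[k-1]'hk1n ∈ M1 := ((halt (k-1) hk1n).2 hp1).1
    rcases Nat.eq_zero_or_pos j with rfl | hjpos
    · exact hhead _ hkN (l[0]'(by omega)) (head?_eq l (by omega)) hjmemk
    · rcases Nat.mod_two_eq_zero_or_one j with hj0 | hj1
      · refine main M1 hM1 (j-1) (by omega) (by omega) (by omega) (by omega) ?_ hkN ?_
        · exact ((halt (j-1) (by omega)).2 (by omega)).1
        · rw [pathEdges_get _ (j-1) (by omega), Sym2.mem_iff]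
          right
          exact gcongr _ _ _ _ (by omega)
      · refine main M1 hM1 j (by omega) (by omega) (by omega) (by omega) ?_ hkN ?_
        · exact ((halt j (by omega)).2 hj1).1
        · rw [pathEdges_get _ j (by omega), Sym2.mem_iff]; left; rfl

theorem walk_extend {E M1 M2 : Finset (Sym2 V)} (hs : ∀ e ∈ E, ¬ e.IsDiag)
    (hM1 : IsMatching E M1) (hM2 : IsMatching E M2)
    {l : List V} (hw : IsWalk M1 M2 l) {f : Sym2 V} {z : V}
    (hz : l.getLast? = some z)
    (hfC : f ∈ (if (pathEdges l).length % 2 = 0 then M2 else M1))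
    (hzf : z ∈ f) :
    ∃ w, IsWalk M1 M2 (l ++ [w]) := by
  obtain ⟨hlen, hhead, halt⟩ := hw
  have hL := pathEdges_length l
  set n := (pathEdges l).length with hn
  have hzval : z = l[l.length - 1]'(by omega) := by
    rw [getLast?_eq l (by omega)] at hz
    exact (Option.some_injective _ hz).symm
  obtain ⟨w, hfw⟩ : ∃ w, f = s(z, w) := by
    obtain ⟨x, y⟩ := f
    rw [Sym2.mem_iff] at hzf
    rcases hzf with rfl | rfl
    · exact ⟨y, rfl⟩
    · exact ⟨x, Sym2.eq_swap.symm⟩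
  refine ⟨w, ?_, ?_, ?_⟩
  · simp only [List.length_append, List.length_cons, List.length_nil]
    omega
  · intro g hg a hsome
    rw [head?_eq _ (by simp only [List.length_append, List.length_cons, List.length_nil]; omega)] at hsome
    have ha : a = (l ++ [w])[0]'(by simp only [List.length_append, List.length_cons, List.length_nil]; omega) := (Option.some_injective _ hsome).symm
    have h0 : (l ++ [w])[0]'(by simp only [List.length_append, List.length_cons, List.length_nil]; omega) = l[0]'(by omega) :=
      List.getElem_append_left (by omega)
    refine hhead g hg a ?_
    rw [head?_eq l (by omega), ha, h0]
  · have hplen' : (pathEdges (l ++ [w])).length = l.length := by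
      rw [pathEdges_length]
      simp
    have hgl : ∀ (i : ℕ) (hi : i < l.length),
        (l ++ [w])[i]'(by simp only [List.length_append, List.length_cons, List.length_nil]; omega) = l[i]'hi :=
      fun i hi => List.getElem_append_left hi
    intro i hi
    rw [hplen'] at hi
    by_cases hilt : i < n
    · have hsame : (pathEdges (l ++ [w]))[i]'(by omega) = (pathEdges l)[i]'hilt := by
        rw [pathEdges_get _ i (by omega), pathEdges_get _ i hilt]
        rw [hgl i (by omega), hgl (i+1) (by omega)]
      rw [hsame]
      exact halt i hilt
    · have hieq : i = l.length - 1 := by omega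
      subst hieq
      have hnew : (pathEdges (l ++ [w]))[l.length - 1]'(by omega) = f := by
        rw [pathEdges_get _ (l.length - 1) (by omega), hfw, hzval]
        have e1 : (l ++ [w])[l.length - 1]'(by simp only [List.length_append, List.length_cons, List.length_nil]; omega) = l[l.length - 1]'(by omega) :=
          hgl _ (by omega)
        have e2 : (l ++ [w])[l.length - 1 + 1]'(by simp only [List.length_append, List.length_cons, List.length_nil]; omega) = w := by
          have h12 : l.length - 1 + 1 = l.length := by omega
          simp only [h12]
          simp
        rw [e1, e2]
      rw [hnew]
      have hin : l.length - 1 = n := by omega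
      rcases Nat.mod_two_eq_zero_or_one n with hp | hp
    -- n even: f ∈ M2, previous edge is in M1
      · rw [if_pos (hin ▸ hp : n % 2 = 0)] at hfC
        have hprev : (pathEdges l)[n-1]'(by omega) ∈ M1 ∧ (pathEdges l)[n-1]'(by omega) ∉ M2 :=
          (halt (n-1) (by omega)).2 (by omega)
        have hzprev : z ∈ (pathEdges l)[n-1]'(by omega) := by
          rw [pathEdges_get _ (n-1) (by omega), Sym2.mem_iff, hzval]
          right
          congr 1
          omega
        have hfM1 : f ∉ M1 := by
          intro hf1
          by_cases hfe : f = (pathEdges l)[n-1]'(by omega)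
          · exact hprev.2 (hfe ▸ hfC)
          · exact hM1.2 f hf1 _ hprev.1 hfe z hzf hzprev
        constructor
        · intro _
          exact ⟨hfC, hfM1⟩
        · intro hcon
          omega
      · rw [if_neg (by omega : ¬ n % 2 = 0)] at hfC
        have hprev : (pathEdges l)[n-1]'(by omega) ∈ M2 ∧ (pathEdges l)[n-1]'(by omega) ∉ M1 :=
          (halt (n-1) (by omega)).1 (by omega)
        have hzprev : z ∈ (pathEdges l)[n-1]'(by omega) := by
          rw [pathEdges_get _ (n-1) (by omega), Sym2.mem_iff, hzval]
          right
          congr 1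
          omega
        have hfM2 : f ∉ M2 := by
          intro hf2
          by_cases hfe : f = (pathEdges l)[n-1]'(by omega)
          · exact hprev.2 (hfe ▸ hfC)
          · exact hM2.2 f hf2 _ hprev.1 hfe z hzf hzprev
        constructor
        · intro hcon
          omega
        · intro _
          exact ⟨hfC, hfM2⟩

theorem step_lemma {E M M' : Finset (Sym2 V)} (hs : ∀ e ∈ E, ¬ e.IsDiag)
    (hM : IsMatching E M) (hM' : IsMatching E M') (hc : M.card < M'.card) :
    (∃ l, IsAugPath E M l) ∨
    (∃ M'', IsMatching E M'' ∧ M''.card = M'.card ∧ (M \ M'').card < (M \ M').card) := by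
  classical
  obtain ⟨a, haM', haM⟩ := exists_uncov hs hM hM' hc
  have haM2 : ∀ f ∈ M, a ∉ f := fun f hf haf => haM (mem_cov.mpr ⟨f, hf, haf⟩)
  obtain ⟨e0, he0M', hae0⟩ := mem_cov.mp haM'
  obtain ⟨b, rfl⟩ : ∃ b, e0 = s(a, b) := by
    obtain ⟨x, y⟩ := e0
    rw [Sym2.mem_iff] at hae0
    rcases hae0 with rfl | rfl
    · exact ⟨y, rfl⟩
    · exact ⟨x, Sym2.eq_swap.symm⟩
  have hpe0 : pathEdges [a, b] = [s(a, b)] := by simp [pathEdges]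
  have hW0 : IsWalk M M' [a, b] := by
    refine ⟨by simp, ?_, ?_⟩
    · intro f hf a' hs'
      have h' : a = a' := by simpa using hs'
      exact h' ▸ haM2 f hf
    · intro i hi
      have hi' : i = 0 := by
        rw [hpe0] at hi
        simp only [List.length_cons, List.length_nil] at hi
        omega
      subst hi'
      have hval : (pathEdges [a, b])[0]'hi = s(a, b) := by
        simp [hpe0]
      rw [hval]
      constructor
      · intro _
        refine ⟨he0M', fun hsM => haM2 _ hsM (by simp)⟩
      · intro hcon
        simp at hcon
  set B := (cov (M ∪ M')).card with hB
  have hWlen : ∀ l, IsWalk M M' l → l.length ≤ B := by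
    intro l hw
    have hnd := walk_nodup hs hM hM' hw
    obtain ⟨hlen, hhead, halt⟩ := hw
    have hL := pathEdges_length l
    have hsub : l.toFinset ⊆ cov (M ∪ M') := by
      intro v hv
      obtain ⟨i, hi, rfl⟩ := List.mem_iff_getElem.mp (List.mem_toFinset.mp hv)
      rcases Nat.eq_zero_or_pos i with rfl | hpos
      · have h0 : l[0]'hi ∈ (pathEdges l)[0]'(by omega) := by
          rw [pathEdges_get _ 0 (by omega), Sym2.mem_iff]; left; rfl
        have := ((halt 0 (by omega)).1 (by omega)).1
        exact mem_cov.mpr ⟨_, Finset.mem_union_right _ this, h0⟩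
      · have hi1 : i - 1 < (pathEdges l).length := by omega
        have hmem : l[i]'hi ∈ (pathEdges l)[i-1]'hi1 := by
          rw [pathEdges_get _ (i-1) hi1, Sym2.mem_iff]
          right
          congr 1
          omega
        have hE' : (pathEdges l)[i-1]'hi1 ∈ M ∪ M' := by
          rcases Nat.mod_two_eq_zero_or_one (i-1) with h | h
          · exact Finset.mem_union_right _ ((halt (i-1) hi1).1 h).1
          · exact Finset.mem_union_left _ ((halt (i-1) hi1).2 h).1
        exact mem_cov.mpr ⟨_, hE', hmem⟩
    calc l.length = l.toFinset.card := (List.toFinset_card_of_nodup hnd).symm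
      _ ≤ B := Finset.card_le_card hsub
  set P : ℕ → Prop := fun k => ∃ l, IsWalk M M' l ∧ l.length = k with hPdef
  have hP2 : P 2 := ⟨[a, b], hW0, rfl⟩
  have h2B : 2 ≤ B := hWlen _ hW0
  have hk0 : P (Nat.findGreatest P B) := Nat.findGreatest_spec h2B hP2
  obtain ⟨l, hw, hlk0⟩ := hk0
  have hmax : ∀ w', ¬ IsWalk M M' (l ++ [w']) := by
    intro w' hww
    have hlenB := hWlen _ hww
    simp only [List.length_append, List.length_cons, List.length_nil] at hlenB
    exact Nat.findGreatest_is_greatest (P := P) (n := B) (k := l.length + 1)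
      (by omega) (by omega) ⟨l ++ [w'], hww, by simp⟩
  have hlen2 : 2 ≤ l.length := hw.1
  have hL := pathEdges_length l
  set n := (pathEdges l).length with hn
  have hn1 : 1 ≤ n := by omega
  have hnd := walk_nodup hs hM hM' hw
  obtain ⟨_, hhead, halt⟩ := hw
  have hwfull : IsWalk M M' l := ⟨hlen2, hhead, halt⟩
  have hzlast : l.getLast? = some (l[l.length - 1]'(by omega)) := getLast?_eq l (by omega)
  have hnocov : ∀ f ∈ (if n % 2 = 0 then M' else M), l[l.length - 1]'(by omega) ∉ f := by
    intro f hf hzf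
    obtain ⟨w', hww⟩ := walk_extend hs hM hM' hwfull hzlast hf hzf
    exact hmax w' hww
  have hEedges : ∀ e ∈ pathEdges l, e ∈ E := by
    intro e he
    obtain ⟨i, hi, rfl⟩ := mem_pathEdges.mp he
    rcases Nat.mod_two_eq_zero_or_one i with h | h
    · exact hM'.1 ((halt i hi).1 h).1
    · exact hM.1 ((halt i hi).2 h).1
  rcases Nat.mod_two_eq_zero_or_one n with hpar | hpar
  · -- even number of edges : dead end, switch M' along the walk
    right
    rw [if_pos hpar] at hnocov
    have halt' : ∀ i (hi : i < (pathEdges l).length), ((pathEdges l)[i] ∈ M' ↔ i % 2 = 0) := by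
      intro i hi
      rcases Nat.mod_two_eq_zero_or_one i with h | h
      · exact ⟨fun _ => h, fun _ => ((halt i hi).1 h).1⟩
      · exact ⟨fun hmem => absurd hmem ((halt i hi).2 h).2, fun hh => by omega⟩
    have hend : ∀ f ∈ M', f ∉ pathEdges l →
        (∀ a', l.head? = some a' → a' ∉ f) ∧ (∀ a', l.getLast? = some a' → a' ∉ f) := by
      intro f hf hfP
      constructor
      · intro a' hsa' ha'f
        rw [head?_eq l (by omega)] at hsa'
        have ha' : a' = l[0]'(by omega) := (Option.some_injective _ hsa').symm
        subst ha'
        have h0 : l[0]'(by omega) ∈ (pathEdges l)[0]'(by omega) := by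
          rw [pathEdges_get _ 0 (by omega), Sym2.mem_iff]; left; rfl
        have h0M' : (pathEdges l)[0]'(by omega) ∈ M' := (halt' 0 (by omega)).mpr (by omega)
        by_cases hfe : f = (pathEdges l)[0]'(by omega)
        · exact hfP (hfe ▸ List.getElem_mem _)
        · exact hM'.2 f hf _ h0M' hfe _ ha'f h0
      · intro a' hsa' ha'f
        rw [hzlast] at hsa'
        have ha' : a' = l[l.length-1]'(by omega) := (Option.some_injective _ hsa').symm
        subst ha'
        exact hnocov f hf ha'f
    obtain ⟨hm'', hcard''⟩ := switch hs hM' l 0 (by omega) hlen2 hnd hEedges halt' hend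
    rw [if_neg (by omega : ¬ (0:ℕ) = 1), if_neg (by omega : ¬ (0:ℕ) = 1)] at hcard''
    set M'' := (M' \ (pathEdges l).toFinset) ∪ ((pathEdges l).toFinset \ M') with hM''def
    refine ⟨M'', hm'', by omega, ?_⟩
    have hPM : ∀ e ∈ pathEdges l, e ∈ M → e ∉ M' := by
      intro e he heM
      obtain ⟨i, hi, rfl⟩ := mem_pathEdges.mp he
      rcases Nat.mod_two_eq_zero_or_one i with h | h
      · exact absurd heM ((halt i hi).1 h).2
      · exact ((halt i hi).2 h).2
    have hsub : M \ M'' ⊆ M \ M' := by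
      intro e he
      obtain ⟨heM, heM''⟩ := Finset.mem_sdiff.mp he
      rw [Finset.mem_sdiff]
      refine ⟨heM, fun heM' => ?_⟩
      by_cases heP : e ∈ (pathEdges l).toFinset
      · exact hPM e (List.mem_toFinset.mp heP) heM heM'
      · exact heM'' (Finset.mem_union_left _ (Finset.mem_sdiff.mpr ⟨heM', heP⟩))
    have hn2 : 2 ≤ n := by omega
    have he1M : (pathEdges l)[1]'(by omega) ∈ M := ((halt 1 (by omega)).2 (by omega)).1
    have he1M' : (pathEdges l)[1]'(by omega) ∉ M' := ((halt 1 (by omega)).2 (by omega)).2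
    have he1P : (pathEdges l)[1]'(by omega) ∈ (pathEdges l).toFinset :=
      List.mem_toFinset.mpr (List.getElem_mem _)
    have he1 : (pathEdges l)[1]'(by omega) ∈ M \ M' := Finset.mem_sdiff.mpr ⟨he1M, he1M'⟩
    have he1n : (pathEdges l)[1]'(by omega) ∉ M \ M'' := by
      rw [Finset.mem_sdiff]
      rintro ⟨-, hnot⟩
      exact hnot (Finset.mem_union_right _ (Finset.mem_sdiff.mpr ⟨he1P, he1M'⟩))
    exact Finset.card_lt_card ⟨hsub, fun hall => he1n (hall he1)⟩
  · -- odd number of edges : `l` is an augmenting path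
    left
    rw [if_neg (by omega : ¬ n % 2 = 0)] at hnocov
    refine ⟨l, hlen2, hnd, hEedges, hpar, ?_, ?_⟩
    · intro i hi
      rcases Nat.mod_two_eq_zero_or_one i with h | h
      · exact ⟨fun hmem => absurd hmem ((halt i hi).1 h).2, fun hh => by omega⟩
      · exact ⟨fun _ => h, fun _ => ((halt i hi).2 h).1⟩
    · intro e he
      constructor
      · intro a' hsa'
        rw [head?_eq l (by omega)] at hsa'
        have ha' : a' = l[0]'(by omega) := (Option.some_injective _ hsa').symm
        subst ha'
        exact hhead e he _ (head?_eq l (by omega))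
      · intro a' hsa'
        rw [hzlast] at hsa'
        have ha' : a' = l[l.length-1]'(by omega) := (Option.some_injective _ hsa').symm
        subst ha'
        exact hnocov e he

theorem exists_augpath {E M : Finset (Sym2 V)} (hs : ∀ e ∈ E, ¬ e.IsDiag)
    (hM : IsMatching E M) :
    ∀ (c : ℕ) (M' : Finset (Sym2 V)), (M \ M').card ≤ c → IsMatching E M' →
      M.card < M'.card → ∃ l, IsAugPath E M l := by
  intro c
  induction c with
  | zero =>
    intro M' hcard hM' hlt
    rcases step_lemma hs hM hM' hlt with h | ⟨M'', _, _, hlt'⟩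
    · exact h
    · omega
  | succ c ih =>
    intro M' hcard hM' hlt
    rcases step_lemma hs hM hM' hlt with h | ⟨M'', hM'', hcard'', hlt'⟩
    · exact h
    · exact ih M'' (by omega) hM'' (by omega)

/-- Berge's theorem: a matching `M` in a (finite simple) graph is a maximum matching
if and only if there is no augmenting path with respect to `M`. -/
theorem berge (E M : Finset (Sym2 V)) (hsimple : ∀ e ∈ E, ¬ e.IsDiag)
    (hM : IsMatching E M) :
    (∀ M', IsMatching E M' → M'.card ≤ M.card) ↔ ¬ ∃ l : List V, IsAugPath E M l := by
  constructor
  · rintro hmax ⟨l, hl⟩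
    obtain ⟨hlen, hnd, hE, hodd, halt, hends⟩ := hl
    obtain ⟨hm, hcard⟩ := switch hsimple hM l 1 le_rfl hlen hnd hE halt
      (fun f hf _ => hends f hf)
    rw [if_pos rfl, if_pos rfl] at hcard
    have := hmax _ hm
    omega
  · intro hnaug
    intro M' hM'
    by_contra hlt
    exact hnaug (exists_augpath hsimple hM (M \ M').card M' le_rfl hM' (by omega))
end

section
/- If P is an augmenting path with respect to a matching M in a graph G, then the symmetric difference M ⊕ P is a matching in G of size |M| + 1. -/
/-! The matching edges of an augmenting path with `n` edges (`n` odd) are exactly its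
odd-indexed ones, so `M ⊕ P` trades `(n - 1) / 2` edges of `M` for the `(n + 1) / 2` other
edges of `P`. These are pairwise disjoint, being non-consecutive edges of a path, and they
avoid the edges of `M` off the path: every vertex of the path is either an endpoint, which is
unmatched, or an interior vertex, which is already matched by an edge of the path. -/

variable {V : Type*} [DecidableEq V]

theorem List.length_filter_eq_half_of_getElem_iff_odd {α : Type*} (p : α → Prop)
    [DecidablePred p] :
    ∀ (L : List α), (∀ i (h : i < L.length), p L[i] ↔ i % 2 = 1) →
      (L.filter (fun x => p x)).length = L.length / 2
  | [], _ => by simp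
  | [a], h => by
    have ha : ¬ p a := fun hpa => absurd ((h 0 (by simp)).mp hpa) (by decide)
    simp [ha]
  | a :: b :: t, h => by
    have ha : ¬ p a := fun hpa => absurd ((h 0 (by simp)).mp hpa) (by decide)
    have hb : p b := (h 1 (by simp)).mpr rfl
    have ht := length_filter_eq_half_of_getElem_iff_odd p t fun i hi => by
      have := h (i + 2) (by simp; omega)
      simpa [Nat.add_mod] using this
    simp only [filter_cons, decide_eq_true_eq, if_neg ha, if_pos hb, length_cons, ht]
    omega

theorem Finset.card_symmDiff_add_two_mul_card_inter {α : Type*} [DecidableEq α]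
    (s t : Finset α) : (symmDiff s t).card + 2 * (s ∩ t).card = s.card + t.card := by
  have hs := card_sdiff_add_card_inter s t
  have ht := card_sdiff_add_card_inter t s
  rw [inter_comm] at ht
  rw [symmDiff_def, sup_eq_union, card_union_of_disjoint disjoint_sdiff_sdiff]
  omega

theorem IsMatching.symmDiff {E M P : Finset (Sym2 V)} (hM : IsMatching E M)
    (hPM : IsMatching E (P \ M)) (hdisj : ∀ e ∈ M \ P, ∀ f ∈ P \ M, ∀ v ∈ e, v ∉ f) :
    IsMatching E (symmDiff M P) := by
  have hmem : ∀ e, e ∈ _root_.symmDiff M P ↔ e ∈ M \ P ∨ e ∈ P \ M := fun e => by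
    rw [Finset.mem_symmDiff, Finset.mem_sdiff, Finset.mem_sdiff]
  refine ⟨fun e he => ?_, fun e he f hf hef v hve hvf => ?_⟩
  · rcases (hmem e).1 he with he | he
    exacts [hM.1 (Finset.mem_sdiff.1 he).1, hPM.1 he]
  rcases (hmem e).1 he with he | he <;> rcases (hmem f).1 hf with hf | hf
  · exact hM.2 e (Finset.mem_sdiff.1 he).1 f (Finset.mem_sdiff.1 hf).1 hef v hve hvf
  · exact hdisj e he f hf v hve hvf
  · exact hdisj f hf e he v hvf hve
  · exact hPM.2 e he f hf hef v hve hvf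

theorem length_pathEdges {α : Type*} (l : List α) : (pathEdges l).length = l.length - 1 := by
  simp [pathEdges]

theorem getElem_pathEdges {α : Type*} {l : List α} {i : ℕ} (h : i < (pathEdges l).length) :
    (pathEdges l)[i] =
      s(l[i]'(by rw [length_pathEdges] at h; omega),
        l[i + 1]'(by rw [length_pathEdges] at h; omega)) := by
  simp only [pathEdges, List.getElem_map, List.getElem_zip, List.getElem_tail]

theorem mem_getElem_pathEdges {α : Type*} {l : List α} {i : ℕ} (h : i < (pathEdges l).length)
    {v : α} :
    v ∈ (pathEdges l)[i] ↔
      v = l[i]'(by rw [length_pathEdges] at h; omega) ∨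
        v = l[i + 1]'(by rw [length_pathEdges] at h; omega) := by
  rw [getElem_pathEdges, Sym2.mem_iff]

theorem mem_of_mem_of_mem_pathEdges {α : Type*} {l : List α} {e : Sym2 α} {v : α}
    (he : e ∈ pathEdges l) (hv : v ∈ e) : v ∈ l := by
  obtain ⟨⟨a, b⟩, hab, rfl⟩ := List.mem_map.1 he
  rcases Sym2.mem_iff.1 hv with rfl | rfl
  · exact (List.of_mem_zip hab).1
  · exact List.mem_of_mem_tail (List.of_mem_zip hab).2

theorem List.Nodup.le_succ_of_mem_getElem_pathEdges {α : Type*} {l : List α} (hl : l.Nodup)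
    {i j : ℕ} (hi : i < (pathEdges l).length) (hj : j < (pathEdges l).length) {v : α}
    (hvi : v ∈ (pathEdges l)[i]) (hvj : v ∈ (pathEdges l)[j]) :
    i ≤ j + 1 ∧ j ≤ i + 1 := by
  rw [length_pathEdges] at hi hj
  rw [mem_getElem_pathEdges] at hvi hvj
  rcases hvi with rfl | rfl <;> rcases hvj with h | h <;>
    have := (hl.getElem_inj_iff).1 h <;> omega

theorem List.Nodup.nodup_pathEdges {α : Type*} {l : List α} (hl : l.Nodup) :
    (pathEdges l).Nodup := by
  refine List.nodup_iff_injective_getElem.2 fun ⟨i, hi⟩ ⟨j, hj⟩ hij => ?_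
  have := length_pathEdges l
  dsimp only at hij
  rw [getElem_pathEdges, getElem_pathEdges, Sym2.eq_iff] at hij
  rcases hij with ⟨h₁, -⟩ | ⟨h₁, h₂⟩
  · exact Fin.ext (hl.getElem_inj_iff.1 h₁)
  · have := hl.getElem_inj_iff.1 h₁
    have := hl.getElem_inj_iff.1 h₂
    omega

theorem exists_odd_getElem_pathEdges_mem {α : Type*} (l : List α) (i : ℕ) (hi₀ : 0 < i)
    (hi : i + 1 < l.length) :
    ∃ j, ∃ h : j < (pathEdges l).length, j % 2 = 1 ∧ l[i] ∈ (pathEdges l)[j] := by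
  rcases Nat.mod_two_eq_zero_or_one i with hev | hodd
  · refine ⟨i - 1, by rw [length_pathEdges]; omega, by omega, ?_⟩
    rw [mem_getElem_pathEdges]
    exact Or.inr (by congr 1; omega)
  · exact ⟨i, by rw [length_pathEdges]; omega, hodd, (mem_getElem_pathEdges _).2 (Or.inl rfl)⟩

namespace IsAugPath

variable {E M : Finset (Sym2 V)} {l : List V}

theorem two_mul_card_inter_add_one (hl : IsAugPath E M l) :
    2 * (M ∩ (pathEdges l).toFinset).card + 1 = (pathEdges l).toFinset.card := by
  obtain ⟨-, hnd, -, hodd, halt, -⟩ := hl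
  have hfilter : M ∩ (pathEdges l).toFinset = ((pathEdges l).filter (· ∈ M)).toFinset := by
    ext e
    simp [and_comm]
  rw [hfilter, List.toFinset_card_of_nodup (hnd.nodup_pathEdges.filter _),
    List.length_filter_eq_half_of_getElem_iff_odd _ _ halt,
    List.toFinset_card_of_nodup hnd.nodup_pathEdges]
  omega

theorem isMatching_sdiff (hl : IsAugPath E M l) : IsMatching E ((pathEdges l).toFinset \ M) := by
  obtain ⟨-, hnd, hE, -, halt, -⟩ := hl
  refine ⟨fun e he => hE e (List.mem_toFinset.1 (Finset.mem_sdiff.1 he).1), ?_⟩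
  intro e he f hf hef v hve hvf
  simp only [Finset.mem_sdiff, List.mem_toFinset, List.mem_iff_getElem] at he hf
  obtain ⟨⟨i, hi, rfl⟩, heM⟩ := he
  obtain ⟨⟨j, hj, rfl⟩, hfM⟩ := hf
  have hi2 : i % 2 = 0 := by by_contra h; exact heM ((halt i hi).2 (by omega))
  have hj2 : j % 2 = 0 := by by_contra h; exact hfM ((halt j hj).2 (by omega))
  have := hnd.le_succ_of_mem_getElem_pathEdges hi hj hve hvf
  exact hef (by congr 1; omega)

theorem not_mem_of_mem_sdiff (hl : IsAugPath E M l) (hM : IsMatching E M) {e : Sym2 V}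
    (he : e ∈ M \ (pathEdges l).toFinset) {v : V} (hv : v ∈ l) : v ∉ e := by
  obtain ⟨-, -, -, -, halt, hends⟩ := hl
  rw [Finset.mem_sdiff, List.mem_toFinset] at he
  obtain ⟨i, hi, rfl⟩ := List.mem_iff_getElem.1 hv
  by_cases h₀ : i = 0
  · subst h₀
    exact (hends e he.1).1 _ (by rw [List.head?_eq_getElem?, List.getElem?_eq_getElem])
  by_cases hlast : i + 1 = l.length
  · refine (hends e he.1).2 _ ?_
    rw [List.getLast?_eq_getElem?, show l.length - 1 = i by omega, List.getElem?_eq_getElem]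
  obtain ⟨j, hj, hjodd, hij⟩ := exists_odd_getElem_pathEdges_mem l i (by omega) (by omega)
  exact fun hie => hM.2 e he.1 _ ((halt j hj).2 hjodd)
    (fun h => he.2 (h ▸ List.getElem_mem hj)) _ hie hij

end IsAugPath

theorem augment_along_path_general (E M : Finset (Sym2 V))
    (hM : IsMatching E M) (l : List V) (hl : IsAugPath E M l) :
    IsMatching E (symmDiff M (pathEdges l).toFinset) ∧
      (symmDiff M (pathEdges l).toFinset).card = M.card + 1 := by
  refine ⟨hM.symmDiff hl.isMatching_sdiff fun e he f hf v hve hvf => ?_, ?_⟩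
  · have hvl := mem_of_mem_of_mem_pathEdges (List.mem_toFinset.1 (Finset.mem_sdiff.1 hf).1) hvf
    exact hl.not_mem_of_mem_sdiff hM he hvl hve
  · have hcard := Finset.card_symmDiff_add_two_mul_card_inter M (pathEdges l).toFinset
    have := hl.two_mul_card_inter_add_one
    omega

/-- If `P` is an augmenting path with respect to a matching `M`, then the symmetric
difference `M ⊕ P` is a matching of size `|M| + 1`. -/
theorem augment_along_path (E M : Finset (Sym2 V)) (hsimple : ∀ e ∈ E, ¬ e.IsDiag)
    (hM : IsMatching E M) (l : List V) (hl : IsAugPath E M l) :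
    IsMatching E (symmDiff M (pathEdges l).toFinset) ∧
      (symmDiff M (pathEdges l).toFinset).card = M.card + 1 :=
  augment_along_path_general E M hM l hl
end

section
/- Under the hypotheses that W isolates the minimum-weight size-k matching M_k and M_{k+1} is a minimum-weight size-(k+1) matching, there is no nonempty set S ⊆ M_k Δ M_{k+1} such that both M_k ⊕ S is a matching of size k and M_{k+1} ⊕ S is a matching of size k+1. -/
variable {V : Type*} [DecidableEq V]

/-- The weight of a set of edges. -/
def wt (W : Sym2 V → ℤ) (F : Finset (Sym2 V)) : ℤ := ∑ e ∈ F, W e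

/-- `W` isolates the matching `M` of size `k`: `M` is a matching of size `k` and every
other matching of size `k` has strictly larger weight. -/
def Isolates (W : Sym2 V → ℤ) (E : Finset (Sym2 V)) (k : ℕ) (M : Finset (Sym2 V)) : Prop :=
  IsMatching E M ∧ M.card = k ∧
    ∀ M', IsMatching E M' → M'.card = k → M' ≠ M → wt W M < wt W M'

/-- `M` is a minimum-weight matching of size `j`. -/
def MinOfSize (W : Sym2 V → ℤ) (E : Finset (Sym2 V)) (j : ℕ) (M : Finset (Sym2 V)) : Prop :=
  IsMatching E M ∧ M.card = j ∧
    ∀ M', IsMatching E M' → M'.card = j → wt W M ≤ wt W M'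

/-- The edge set `E` is bipartite with left part `L`. -/
def Bipartite (E : Finset (Sym2 V)) (L : Finset V) : Prop :=
  ∀ e ∈ E, ∃ u ∈ L, ∃ v, v ∉ L ∧ e = s(u, v)

/-- If `W` isolates the minimum-weight size-`k` matching `Mk` of a bipartite graph and
`Mk1` is a minimum-weight size-`(k+1)` matching, then there is no nonempty
`S ⊆ Mk Δ Mk1` such that both `Mk ⊕ S` is a matching of size `k` and `Mk1 ⊕ S` is a
matching of size `k+1`. -/
theorem no_exchange_set (E : Finset (Sym2 V)) (L : Finset V)
    (hbip : Bipartite E L) (W : Sym2 V → ℤ) (k : ℕ) (Mk Mk1 : Finset (Sym2 V))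
    (hMk : Isolates W E k Mk) (hMk1 : MinOfSize W E (k + 1) Mk1) :
    ¬ ∃ S : Finset (Sym2 V), S ≠ ∅ ∧ S ⊆ symmDiff Mk Mk1 ∧
        IsMatching E (symmDiff Mk S) ∧ (symmDiff Mk S).card = k ∧
        IsMatching E (symmDiff Mk1 S) ∧ (symmDiff Mk1 S).card = k + 1 := by
  rintro ⟨S, hSne, hSsub, hA, hAcard, hB, hBcard⟩
  obtain ⟨_, _, hmin⟩ := hMk
  obtain ⟨_, _, hmin1⟩ := hMk1
  have hAne : symmDiff Mk S ≠ Mk := by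
    intro h
    exact hSne (symmDiff_eq_left.mp h)
  have h1 : wt W Mk < wt W (symmDiff Mk S) := hmin _ hA hAcard hAne
  have h2 : wt W Mk1 ≤ wt W (symmDiff Mk1 S) := hmin1 _ hB hBcard
  have hsd : ∀ M : Finset (Sym2 V),
      wt W (symmDiff M S) = wt W (M \ S) + wt W (S \ M) := by
    intro M
    rw [symmDiff_def]
    exact Finset.sum_union disjoint_sdiff_sdiff
  have hsplit : ∀ M : Finset (Sym2 V), wt W M = wt W (M \ S) + wt W (M ∩ S) := by
    intro M
    unfold wt
    rw [add_comm]
    exact (Finset.sum_inter_add_sum_sdiff M S W).symm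
  have e1 : S \ Mk = Mk1 ∩ S := by
    ext e
    simp only [Finset.mem_sdiff, Finset.mem_inter]
    constructor
    · rintro ⟨heS, heMk⟩
      have := hSsub heS
      rw [Finset.mem_symmDiff] at this
      tauto
    · rintro ⟨heMk1, heS⟩
      have := hSsub heS
      rw [Finset.mem_symmDiff] at this
      tauto
  have e2 : S \ Mk1 = Mk ∩ S := by
    ext e
    simp only [Finset.mem_sdiff, Finset.mem_inter]
    constructor
    · rintro ⟨heS, heMk1⟩
      have := hSsub heS
      rw [Finset.mem_symmDiff] at this
      tauto
    · rintro ⟨heMk, heS⟩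
      have := hSsub heS
      rw [Finset.mem_symmDiff] at this
      tauto
  have key : wt W (symmDiff Mk S) + wt W (symmDiff Mk1 S) = wt W Mk + wt W Mk1 := by
    rw [hsd Mk, hsd Mk1, e1, e2, hsplit Mk, hsplit Mk1]
    ring
  linarith
end

section
/- If W isolates the minimum-weight size-k matching M_k, then the residual graph of M_k contains no cycle of non-positive residual weight. -/
/-! The edges of a residual cycle `C` alternate between matched and unmatched ones: a residual
edge leaves the left side exactly when it is unmatched, and every edge joins the two sides.
Exchanging them, `Mk ∆ C` is again a matching of size `k`, different from `Mk`, and its weight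
exceeds that of `Mk` by exactly the residual weight of `C`. Isolation makes this excess positive. -/

variable {V : Type*} [DecidableEq V]

/-- There is a directed edge `a → b` in the residual graph of the matching `M` (in a
bipartite graph with left part `L`): matched edges are directed from right to left and
unmatched edges from left to right. -/
def ResStep (E M : Finset (Sym2 V)) (L : Finset V) (a b : V) : Prop :=
  s(a, b) ∈ E ∧ ((s(a, b) ∈ M ∧ a ∉ L) ∨ (s(a, b) ∉ M ∧ a ∈ L))

/-- The residual weight of the directed edge `a → b`: `−W(e)` on matched edges and
`W(e)` on unmatched edges. -/
def resWeight (W : Sym2 V → ℤ) (M : Finset (Sym2 V)) (a b : V) : ℤ :=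
  if s(a, b) ∈ M then -W s(a, b) else W s(a, b)


open Finset
open scoped symmDiff

section Residual
variable {α : Type*}

theorem wt_symmDiff [DecidableEq α] (W : Sym2 α → ℤ) (M C : Finset (Sym2 α)) :
    wt W (M ∆ C) = wt W M + ∑ e ∈ C, if e ∈ M then -W e else W e := by
  have hΔ : wt W (M ∆ C) = wt W (M \ C) + wt W (C \ M) :=
    sum_union disjoint_sdiff_sdiff
  have hM : wt W (M \ (M ∩ C)) + wt W (M ∩ C) = wt W M := sum_sdiff inter_subset_left
  rw [sdiff_inter_self_left] at hM
  rw [sum_ite, filter_mem_eq_inter, filter_notMem_eq_sdiff, sum_neg_distrib, inter_comm]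
  unfold wt at *
  linarith

theorem card_symmDiff_eq_of_card_inter_eq [DecidableEq α] {M C : Finset α}
    (h : #(C ∩ M) = #(C \ M)) : #(M ∆ C) = #M := by
  rw [symmDiff_def, sup_eq_union, card_union_of_disjoint disjoint_sdiff_sdiff, ← h, inter_comm,
    card_sdiff_add_card_inter]

theorem IsMatching.eq_of_mem_of_mem {E M : Finset (Sym2 α)} (hM : IsMatching E M)
    {f g : Sym2 α} (hf : f ∈ M) (hg : g ∈ M) {x : α} (hxf : x ∈ f) (hxg : x ∈ g) : f = g := by
  by_contra hfg
  exact hM.2 f hf g hg hfg x hxf hxg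

theorem Bipartite.mem_iff_notMem {E : Finset (Sym2 α)} {L : Finset α} (hE : Bipartite E L)
    {a b : α} (hab : s(a, b) ∈ E) : b ∈ L ↔ a ∉ L := by
  obtain ⟨u, hu, w, hw, huw⟩ := hE _ hab
  rcases Sym2.eq_iff.mp huw with ⟨rfl, rfl⟩ | ⟨rfl, rfl⟩ <;> tauto

theorem ResStep.next_mem_iff_notMem {E M : Finset (Sym2 α)} {L : Finset α}
    (hE : Bipartite E L) {a b c : α} (hab : ResStep E M L a b) (hbc : ResStep E M L b c) :
    s(b, c) ∈ M ↔ s(a, b) ∉ M := by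
  have := hE.mem_iff_notMem hab.1
  unfold ResStep at hab hbc
  tauto

end Residual

theorem List.zip_rotate_one_eq_ofFn {α : Type*} (l : List α) :
    l.zip (l.rotate 1) = List.ofFn fun i : Fin l.length => (l[i], l[finRotate _ i]) := by
  refine List.ext_getElem (by simp) fun k h₁ h₂ => ?_
  have : NeZero l.length := ⟨by simp at h₁; omega⟩
  simp [Fin.val_add]

section Cycle
variable {α ι : Type*} (v : ι → α) (σ : Equiv.Perm ι)

/-- With `v` injective, `σ` describes vertex-disjoint cycles `v i → v (σ i)`. -/
def cycleEdge (i : ι) : Sym2 α := s(v i, v (σ i))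

def cycleEdges [DecidableEq α] [Fintype ι] : Finset (Sym2 α) := univ.image (cycleEdge v σ)

def IsAlternating (M : Finset (Sym2 α)) : Prop :=
  ∀ i, cycleEdge v σ (σ i) ∈ M ↔ cycleEdge v σ i ∉ M

variable {v σ} {M : Finset (Sym2 α)}

theorem mem_cycleEdge_iff (hv : Function.Injective v) {i j : ι} :
    v j ∈ cycleEdge v σ i ↔ j = i ∨ j = σ i := by
  simp [cycleEdge, hv.eq_iff]

theorem exists_apply_eq_of_mem_cycleEdge {i : ι} {x : α} (hx : x ∈ cycleEdge v σ i) :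
    ∃ j, v j = x := by
  rcases Sym2.mem_iff.mp hx with rfl | rfl <;> exact ⟨_, rfl⟩

theorem cycleEdge_injective (hv : Function.Injective v)
    (halt : IsAlternating v σ M) :
    Function.Injective (cycleEdge v σ) := by
  intro i j hij
  rcases Sym2.eq_iff.mp hij with ⟨h, -⟩ | ⟨h₁, h₂⟩
  · exact hv h
  · have hi : i = σ j := hv h₁
    have := halt j
    rw [← hi, hij] at this
    tauto

theorem eq_of_mem_cycleEdge_of_notMem (hv : Function.Injective v)
    (halt : IsAlternating v σ M) {i j : ι}
    (hi : cycleEdge v σ i ∉ M) (hj : cycleEdge v σ j ∉ M) {x : α}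
    (hxi : x ∈ cycleEdge v σ i) (hxj : x ∈ cycleEdge v σ j) : i = j := by
  obtain ⟨m, rfl⟩ := exists_apply_eq_of_mem_cycleEdge hxi
  rw [mem_cycleEdge_iff hv] at hxi hxj
  rcases hxi with rfl | rfl <;> rcases hxj with h | h
  · exact h
  · have := halt j; rw [← h] at this; tauto
  · have := halt i; rw [h] at this; tauto
  · exact σ.injective h

variable [DecidableEq α] [Fintype ι]

theorem card_cycleEdges_inter_eq_card_sdiff (hv : Function.Injective v)
    (halt : IsAlternating v σ M) :
    #(cycleEdges v σ ∩ M) = #(cycleEdges v σ \ M) := by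
  have hinj := cycleEdge_injective hv halt
  rw [← filter_mem_eq_inter, ← filter_notMem_eq_sdiff, cycleEdges, filter_image, filter_image,
    card_image_of_injective _ hinj, card_image_of_injective _ hinj]
  exact card_equiv σ fun i => by simp [halt i]

theorem IsMatching.mem_cycleEdges {E : Finset (Sym2 α)} (hM : IsMatching E M)
    (halt : IsAlternating v σ M) {f : Sym2 α} (hf : f ∈ M)
    {x : α} (hxf : x ∈ f) {i : ι} (hxi : x ∈ cycleEdge v σ i) : f ∈ cycleEdges v σ := by
  obtain ⟨j, rfl⟩ := exists_apply_eq_of_mem_cycleEdge hxi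
  by_cases hmem : cycleEdge v σ j ∈ M
  · rw [hM.eq_of_mem_of_mem hf hmem hxf (Sym2.mem_mk_left _ _)]
    exact mem_image_of_mem _ (mem_univ j)
  · have hprev : cycleEdge v σ (σ.symm j) ∈ M := by
      simpa [hmem] using halt (σ.symm j)
    have hjprev : v j ∈ cycleEdge v σ (σ.symm j) := by
      simp [cycleEdge]
    rw [hM.eq_of_mem_of_mem hf hprev hxf hjprev]
    exact mem_image_of_mem _ (mem_univ _)

theorem IsMatching.symmDiff_cycleEdges {E : Finset (Sym2 α)} (hM : IsMatching E M)
    (hE : ∀ i, cycleEdge v σ i ∈ E) (hv : Function.Injective v)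
    (halt : IsAlternating v σ M) :
    IsMatching E (M ∆ cycleEdges v σ) := by
  refine ⟨fun f hf => ?_, fun f hf g hg hfg x hxf hxg => hfg ?_⟩
  · rcases mem_symmDiff.mp hf with ⟨hfM, -⟩ | ⟨hfC, -⟩
    · exact hM.1 hfM
    · obtain ⟨i, -, rfl⟩ := mem_image.mp hfC
      exact hE i
  rcases mem_symmDiff.mp hf with ⟨hfM, hfC⟩ | ⟨hfC, hfM⟩ <;>
    rcases mem_symmDiff.mp hg with ⟨hgM, hgC⟩ | ⟨hgC, hgM⟩
  · exact hM.eq_of_mem_of_mem hfM hgM hxf hxg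
  · obtain ⟨j, -, rfl⟩ := mem_image.mp hgC
    exact absurd (hM.mem_cycleEdges halt hfM hxf hxg) hfC
  · obtain ⟨i, -, rfl⟩ := mem_image.mp hfC
    exact absurd (hM.mem_cycleEdges halt hgM hxg hxf) hgC
  · obtain ⟨i, -, rfl⟩ := mem_image.mp hfC
    obtain ⟨j, -, rfl⟩ := mem_image.mp hgC
    rw [eq_of_mem_cycleEdge_of_notMem hv halt hfM hgM hxf hxg]

end Cycle

/-- If `W` isolates the minimum-weight size-`k` matching `Mk` of a bipartite graph, then
the residual graph of `Mk` contains no cycle of non-positive residual weight: every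
(vertex-simple, cyclically closed) cycle of the residual graph has strictly positive
residual weight. -/
theorem residual_no_nonpositive_cycle (E : Finset (Sym2 V)) (L : Finset V)
    (hbip : Bipartite E L) (W : Sym2 V → ℤ) (k : ℕ) (Mk : Finset (Sym2 V))
    (hMk : Isolates W E k Mk) :
    ∀ l : List V, l ≠ [] → l.Nodup →
      (∀ p ∈ l.zip (l.rotate 1), ResStep E Mk L p.1 p.2) →
      0 < ((l.zip (l.rotate 1)).map fun p => resWeight W Mk p.1 p.2).sum := by
  intro l hne hnd hstep
  obtain ⟨hmatch, hcard, hmin⟩ := hMk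
  set v : Fin l.length → V := fun i => l[i]
  set σ := finRotate l.length
  have hv : Function.Injective v := List.nodup_iff_injective_get.mp hnd
  rw [List.zip_rotate_one_eq_ofFn] at hstep ⊢
  have hres (i) : ResStep E Mk L (v i) (v (σ i)) := hstep _ (List.mem_ofFn.2 ⟨i, rfl⟩)
  have halt : IsAlternating v σ Mk := fun i =>
    (hres i).next_mem_iff_notMem hbip (hres (σ i))
  have hne_Mk : Mk ∆ cycleEdges v σ ≠ Mk := by
    have : NeZero l.length := ⟨by simpa using hne⟩
    simpa [symmDiff_eq_left, cycleEdges] using univ_nonempty.ne_empty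
  have hcard_symmDiff : #(Mk ∆ cycleEdges v σ) = k := by
    rw [card_symmDiff_eq_of_card_inter_eq (card_cycleEdges_inter_eq_card_sdiff hv halt), hcard]
  have hwt : wt W (Mk ∆ cycleEdges v σ) =
      wt W Mk + ((List.ofFn fun i => (v i, v (σ i))).map fun p => resWeight W Mk p.1 p.2).sum := by
    rw [wt_symmDiff, cycleEdges, sum_image (cycleEdge_injective hv halt).injOn, List.map_ofFn,
      List.sum_ofFn]
    rfl -- `resWeight W Mk a b` is the summand of `wt_symmDiff` at `s(a, b)`
  have := hmin _ (hmatch.symmDiff_cycleEdges (fun i => (hres i).1) hv halt) hcard_symmDiff hne_Mk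
  linarith
end

section
/- Let e be a threshold edge in a weighted directed graph with no non-positive-weight cycles: e = (u,v) lies on some but not all minimum-weight s-t paths. Then W(e) = δ'_{s,t} − (δ_{s,u} + δ_{v,t}), where δ_{x,y} denotes the minimum weight of an x-y path and δ'_{s,t} is the minimum weight of an s-t path avoiding e. -/
variable {V : Type*} [DecidableEq V]

/-- `l` is (the vertex list of) a simple directed path from `s` to `t` in the directed
graph with edge set `E`. -/
def DPath (E : Finset (V × V)) (s t : V) (l : List V) : Prop :=
  l ≠ [] ∧ l.head? = some s ∧ l.getLast? = some t ∧ l.Nodup ∧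
    ∀ p ∈ l.zip l.tail, p ∈ E

/-- `l` is (the vertex list of) a directed walk from `s` to `t` in the directed graph with
edge set `E` (vertices may repeat). -/
def DWalk (E : Finset (V × V)) (s t : V) (l : List V) : Prop :=
  l ≠ [] ∧ l.head? = some s ∧ l.getLast? = some t ∧
    ∀ p ∈ l.zip l.tail, p ∈ E

/-- The total weight of the walk with vertex list `l` under edge weights `W`. -/
def dWeight (W : V × V → ℤ) (l : List V) : ℤ :=
  ((l.zip l.tail).map W).sum

/-- Every directed cycle of the graph has strictly positive total weight. -/
def PosCycles (E : Finset (V × V)) (W : V × V → ℤ) : Prop :=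
  ∀ l : List V, l ≠ [] → l.Nodup →
    (∀ p ∈ l.zip (l.rotate 1), p ∈ E) →
    0 < ((l.zip (l.rotate 1)).map W).sum

/-- `l` is a minimum-weight (simple) `s`-`t` path. -/
def DMinPath (E : Finset (V × V)) (W : V × V → ℤ) (s t : V) (l : List V) : Prop :=
  DPath E s t l ∧ ∀ l', DPath E s t l' → dWeight W l ≤ dWeight W l'

/-! A minimum-weight `s`-`t` path through `(u, v)` splits there into an `s`-`u` path and a
`v`-`t` path, so `δ_{s,u} + W(u,v) + δ_{v,t} ≤ δ_{s,t}`. Conversely, joining minimum `s`-`u` and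
`v`-`t` paths by the edge gives an `s`-`t` walk of weight `δ_{s,u} + W(u,v) + δ_{v,t}`; cutting out
a simple cycle at the first repeated vertex never increases the weight because cycles are
positive, so the walk shortens to a path and the reverse inequality holds. Finally a minimum path
avoiding `(u, v)` shows `δ'_{s,t} = δ_{s,t}`. -/

namespace List

variable {α : Type*}

theorem zip_tail_append_cons (l₁ : List α) (a : α) (l₂ : List α) :
    (l₁ ++ a :: l₂).zip (l₁ ++ a :: l₂).tail =
      (l₁ ++ [a]).zip (l₁ ++ [a]).tail ++ (a :: l₂).zip (a :: l₂).tail := by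
  induction l₁ with
  | nil => simp
  | cons b l₁ ih => cases l₁ <;> simp_all

theorem exists_eq_append_cons_cons_of_mem_zip_tail {l : List α} {a b : α}
    (h : (a, b) ∈ l.zip l.tail) : ∃ l₁ l₂, l = l₁ ++ a :: b :: l₂ := by
  induction l with
  | nil => simp at h
  | cons c l ih =>
    cases l with
    | nil => simp at h
    | cons d l =>
      rcases mem_cons.1 h with h | h
      · obtain ⟨rfl, rfl⟩ := Prod.mk.inj h
        exact ⟨[], l, rfl⟩
      · obtain ⟨l₁, l₂, hl⟩ := ih h
        exact ⟨c :: l₁, l₂, by simp [hl]⟩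

theorem zip_rotate_one_cons (a : α) (l : List α) :
    (a :: l).zip ((a :: l).rotate 1) = (a :: l ++ [a]).zip (a :: l ++ [a]).tail := by
  rw [rotate_cons_succ, rotate_zero, cons_append, tail_cons, ← cons_append,
    ← (l ++ [a]).append_nil, zip_append (by simp)]
  simp

theorem exists_eq_append_cons_append_cons_of_not_nodup {l : List α} (h : ¬ l.Nodup) :
    ∃ l₁ a l₂ l₃, l = l₁ ++ a :: (l₂ ++ a :: l₃) ∧ (a :: l₂).Nodup := by
  induction l with
  | nil => simp at h
  | cons b l ih =>
    by_cases hl : l.Nodup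
    · have hb : b ∈ l := by_contra fun hb ↦ h (nodup_cons.2 ⟨hb, hl⟩)
      obtain ⟨l₂, l₃, rfl⟩ := append_of_mem hb
      exact ⟨[], b, l₂, l₃, rfl,
        (nodup_middle.1 hl).sublist ((sublist_append_left l₂ l₃).cons_cons b)⟩
    · obtain ⟨l₁, a, l₂, l₃, rfl, hcyc⟩ := ih hl
      exact ⟨b :: l₁, a, l₂, l₃, rfl, hcyc⟩

end List

section

variable {α : Type*} {E : Finset (α × α)} {W : α × α → ℤ} {s t u v x y : α}
  {p q p₁ p₂ : List α}

theorem dWeight_append_cons (W : α × α → ℤ) (p : List α) (x : α) (q : List α) :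
    dWeight W (p ++ x :: q) = dWeight W (p ++ [x]) + dWeight W (x :: q) := by
  rw [dWeight, List.zip_tail_append_cons, List.map_append, List.sum_append, dWeight, dWeight]

theorem dWeight_cons_cons (W : α × α → ℤ) (x y : α) (q : List α) :
    dWeight W (x :: y :: q) = W (x, y) + dWeight W (y :: q) := by
  simp [dWeight]

theorem dWalk_append_cons_iff :
    DWalk E s t (p ++ x :: q) ↔ DWalk E s x (p ++ [x]) ∧ DWalk E x t (x :: q) := by
  have hhead : (p ++ x :: q).head? = (p ++ [x]).head? := by cases p <;> rfl
  have hlast : (p ++ x :: q).getLast? = (x :: q).getLast? := by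
    simp [List.getLast?_append, List.getLast?_cons]
  rw [DWalk, DWalk, DWalk, List.zip_tail_append_cons, List.forall_mem_append, hhead, hlast,
    List.getLast?_concat, List.head?_cons]
  simp
  tauto

theorem dWalk_cons_cons_iff :
    DWalk E s t (x :: y :: q) ↔ s = x ∧ (x, y) ∈ E ∧ DWalk E y t (y :: q) := by
  simp [DWalk]
  tauto

theorem dPath_iff_dWalk_and_nodup : DPath E s t p ↔ DWalk E s t p ∧ p.Nodup := by
  simp only [DPath, DWalk]
  tauto

theorem DPath.dWalk (h : DPath E s t p) : DWalk E s t p :=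
  (dPath_iff_dWalk_and_nodup.1 h).1

theorem PosCycles.dWeight_pos (hpos : PosCycles E W) (hc : DWalk E x x (x :: p ++ [x]))
    (hp : (x :: p).Nodup) : 0 < dWeight W (x :: p ++ [x]) := by
  have hcycle := hpos (x :: p) (List.cons_ne_nil x p) hp
  rw [List.zip_rotate_one_cons] at hcycle
  exact hcycle hc.2.2.2

theorem DWalk.exists_dPath_dWeight_le (hpos : PosCycles E W) (h : DWalk E s t p) :
    ∃ q, DPath E s t q ∧ dWeight W q ≤ dWeight W p := by
  induction hn : p.length using Nat.strong_induction_on generalizing p with | _ n ih =>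
  by_cases hnd : p.Nodup
  · exact ⟨p, dPath_iff_dWalk_and_nodup.2 ⟨h, hnd⟩, le_rfl⟩
  obtain ⟨p₁, x, c, p₂, rfl, hc⟩ := List.exists_eq_append_cons_append_cons_of_not_nodup hnd
  obtain ⟨hsx, hxct⟩ := dWalk_append_cons_iff.1 h
  rw [← List.cons_append] at hxct
  obtain ⟨hxx, hxt⟩ := dWalk_append_cons_iff.1 hxct
  have hshort : DWalk E s t (p₁ ++ x :: p₂) := dWalk_append_cons_iff.2 ⟨hsx, hxt⟩
  obtain ⟨q, hq, hle⟩ := ih _ (by simp [← hn]) hshort rfl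
  refine ⟨q, hq, hle.trans ?_⟩
  have hsplit : dWeight W (p₁ ++ x :: (c ++ x :: p₂)) =
      dWeight W (p₁ ++ [x]) + dWeight W (x :: c ++ [x]) + dWeight W (x :: p₂) := by
    rw [dWeight_append_cons W p₁ x, ← List.cons_append, dWeight_append_cons W (x :: c) x,
      add_assoc]
  rw [dWeight_append_cons W p₁ x p₂, hsplit]
  linarith [hpos.dWeight_pos hxx hc]

theorem DPath.exists_split_of_mem_zip_tail (h : DPath E s t p) (huv : (u, v) ∈ p.zip p.tail) :
    ∃ p₁ p₂, DPath E s u p₁ ∧ DPath E v t p₂ ∧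
      dWeight W p = dWeight W p₁ + W (u, v) + dWeight W p₂ := by
  obtain ⟨p₁, p₂, rfl⟩ := List.exists_eq_append_cons_cons_of_mem_zip_tail huv
  rw [dPath_iff_dWalk_and_nodup, dWalk_append_cons_iff, dWalk_cons_cons_iff] at h
  obtain ⟨⟨hsu, -, -, hvt⟩, hnd⟩ := h
  refine ⟨p₁ ++ [u], v :: p₂, dPath_iff_dWalk_and_nodup.2 ⟨hsu, ?_⟩,
    dPath_iff_dWalk_and_nodup.2 ⟨hvt, ?_⟩, ?_⟩
  · exact hnd.sublist ((List.sublist_append_left [u] (v :: p₂)).append_left p₁)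
  · exact hnd.sublist ((List.sublist_cons_self u _).trans (List.sublist_append_right p₁ _))
  · rw [dWeight_append_cons, dWeight_cons_cons]
    ring

theorem DWalk.exists_dPath_via_edge (hpos : PosCycles E W) (h₁ : DWalk E s u p₁)
    (huv : (u, v) ∈ E) (h₂ : DWalk E v t p₂) :
    ∃ q, DPath E s t q ∧ dWeight W q ≤ dWeight W p₁ + W (u, v) + dWeight W p₂ := by
  obtain ⟨p₁, rfl⟩ := List.getLast?_eq_some_iff.1 h₁.2.2.1
  obtain ⟨p₂, rfl⟩ := List.head?_eq_some_iff.1 h₂.2.1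
  have hw : DWalk E s t (p₁ ++ u :: v :: p₂) :=
    dWalk_append_cons_iff.2 ⟨h₁, dWalk_cons_cons_iff.2 ⟨rfl, huv, h₂⟩⟩
  obtain ⟨q, hq, hle⟩ := DWalk.exists_dPath_dWeight_le hpos hw
  refine ⟨q, hq, hle.trans_eq ?_⟩
  rw [dWeight_append_cons, dWeight_cons_cons]
  ring

end

/-- Let `e = (u,v)` be a threshold edge (it lies on some but not all minimum-weight
`s`-`t` paths) in a weighted directed graph all of whose cycles have strictly positive
weight. If `δ_{s,u}`, `δ_{v,t}`, `δ_{s,t}` are the minimum weights of the corresponding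
paths and `δ'_{s,t}` is the minimum weight of an `s`-`t` path avoiding `e`, then
`W(e) = δ'_{s,t} − (δ_{s,u} + δ_{v,t})`. -/
theorem threshold_edge_weight (E : Finset (V × V)) (W : V × V → ℤ)
    (s t u v : V) (hpos : PosCycles E W) (he : (u, v) ∈ E)
    (dsu dvt dst d'st : ℤ)
    (hdsu : (∃ p, DPath E s u p ∧ dWeight W p = dsu) ∧
      ∀ p, DPath E s u p → dsu ≤ dWeight W p)
    (hdvt : (∃ p, DPath E v t p ∧ dWeight W p = dvt) ∧
      ∀ p, DPath E v t p → dvt ≤ dWeight W p)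
    (hdst : (∃ p, DPath E s t p ∧ dWeight W p = dst) ∧
      ∀ p, DPath E s t p → dst ≤ dWeight W p)
    (hd' : (∃ p, DPath E s t p ∧ (u, v) ∉ p.zip p.tail ∧ dWeight W p = d'st) ∧
      ∀ p, DPath E s t p → (u, v) ∉ p.zip p.tail → d'st ≤ dWeight W p)
    (hon : ∃ p, DPath E s t p ∧ dWeight W p = dst ∧ (u, v) ∈ p.zip p.tail)
    (hoff : ∃ p, DPath E s t p ∧ dWeight W p = dst ∧ (u, v) ∉ p.zip p.tail) :
    W (u, v) = d'st - (dsu + dvt) := by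
  obtain ⟨p₀, hp₀, hp₀w, hp₀e⟩ := hoff
  obtain ⟨⟨q, hq, -, hqw⟩, hd'min⟩ := hd'
  have hd'st : d'st = dst := le_antisymm (hp₀w ▸ hd'min p₀ hp₀ hp₀e) (hqw ▸ hdst.2 q hq)
  obtain ⟨p, hp, hpw, huv⟩ := hon
  obtain ⟨p₁, p₂, hp₁, hp₂, hpsplit⟩ := hp.exists_split_of_mem_zip_tail (W := W) huv
  have hlow : dsu + W (u, v) + dvt ≤ dst := by linarith [hdsu.2 p₁ hp₁, hdvt.2 p₂ hp₂]
  obtain ⟨r₁, hr₁, rfl⟩ := hdsu.1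
  obtain ⟨r₂, hr₂, rfl⟩ := hdvt.1
  obtain ⟨r, hr, hrw⟩ := DWalk.exists_dPath_via_edge hpos hr₁.dWalk he hr₂.dWalk
  have hhigh : dst ≤ dWeight W r₁ + W (u, v) + dWeight W r₂ := (hdst.2 r hr).trans hrw
  omega
end
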